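/- arXiv:1110.1171 — 2 statements merged into one kernel-verified Lean document; each statement's English description precedes it below -/
import Mathlib

section
/- Let c, d > 2 and n = c + d. In ℂ[T_{ij}, T_∞], let I be the ideal generated by T_∞T_{ij}T_{kl} − T_{ik}T_{jl} + T_{il}T_{jk} for quadruples with i < j ≤ c < k < l, and T_{ij}T_{kl} − T_{ik}T_{jl} + T_{il}T_{jk} for all other quadruples i < j < k < l. Then T_∞ is not contained in √I, and the localization of ℂ[T_{ij}, T_∞]/I at T_∞ is an integral domain. -/
open MvPolynomial

/-- Index set for the Plücker variables `T_{ij}`, `i < j` (0-indexed: `1 ≤ i` becomes `0 ≤ i`,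
`j ≤ n` becomes `j.val < n`). -/
abbrev PIdx (n : ℕ) := {p : Fin n × Fin n // p.1 < p.2}

/-- Index set for the variables `T_{ij}` together with the extra variable `T_∞`. -/
abbrev Idx (n : ℕ) := PIdx n ⊕ Unit

/-- The variable `T_{ij}`. -/
noncomputable def W {n : ℕ} (i j : Fin n) (h : i < j) : MvPolynomial (Idx n) ℂ :=
  X (Sum.inl ⟨(i, j), h⟩)

/-- The variable `T_∞`. -/
noncomputable def Tinf {n : ℕ} : MvPolynomial (Idx n) ℂ := X (Sum.inr ())

/-- Generators of the ideal `I`: `T_∞T_{ij}T_{kl} - T_{ik}T_{jl} + T_{il}T_{jk}` for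
quadruples `i < j ≤ c < k < l` (1-indexed; `j ≤ c` is `j.val < c` and `c + 1 ≤ k` is
`c ≤ k.val` in 0-indexed terms), and the Plücker trinomials
`T_{ij}T_{kl} - T_{ik}T_{jl} + T_{il}T_{jk}` for all other quadruples `i < j < k < l`. -/
def IGens (c n : ℕ) : Set (MvPolynomial (Idx n) ℂ) :=
  {P | ∃ (i j k l : Fin n) (hij : i < j) (hjk : j < k) (hkl : k < l),
    ((j.val < c ∧ c ≤ k.val) ∧
      P = Tinf * W i j hij * W k l hkl - W i k (hij.trans hjk) * W j l (hjk.trans hkl)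
            + W i l (hij.trans (hjk.trans hkl)) * W j k hjk) ∨
    (¬(j.val < c ∧ c ≤ k.val) ∧
      P = W i j hij * W k l hkl - W i k (hij.trans hjk) * W j l (hjk.trans hkl)
            + W i l (hij.trans (hjk.trans hkl)) * W j k hjk)}

/-- Generators of the ideal `J = I + (T_∞)`: the variable `T_∞`, the binomials
`-T_{ik}T_{jl} + T_{il}T_{jk}` for quadruples `i < j ≤ c < k < l`, and the Plücker
trinomials for all other quadruples `i < j < k < l`. -/
def JGens (c n : ℕ) : Set (MvPolynomial (Idx n) ℂ) :=
  insert Tinf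
    {P | ∃ (i j k l : Fin n) (hij : i < j) (hjk : j < k) (hkl : k < l),
      ((j.val < c ∧ c ≤ k.val) ∧
        P = - W i k (hij.trans hjk) * W j l (hjk.trans hkl)
              + W i l (hij.trans (hjk.trans hkl)) * W j k hjk) ∨
      (¬(j.val < c ∧ c ≤ k.val) ∧
        P = W i j hij * W k l hkl - W i k (hij.trans hjk) * W j l (hjk.trans hkl)
              + W i l (hij.trans (hjk.trans hkl)) * W j k hjk)}

/-!
Send `T_{ij}` to the minor `x_i y_j - x_j y_i` of a generic `2 × n` matrix and `T_∞` to a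
further variable `s`. A product `T_{ab} T_{ce}` with `a < c < e < b` equals
`T_{ae} T_{cb} - T_{ac} T_{eb}` modulo a Plücker relation, and both new products have smaller
`∑ (j - i)²`; so modulo the Plücker relations every polynomial is a combination of standard
monomials, whose index pairs form a chain. A standard monomial can be recovered from the lex-leading
monomial of its image (peel off the pair made of the least `x`-index and the least `y`-index), so
the images of distinct standard monomials are linearly independent. Hence the Plücker ideal is the
kernel of a map to a domain, and it is prime.

After inverting `T_∞`, the automorphism `T_{ij} ↦ T_∞⁻¹ T_{ij}` for `j ≤ c` sends every generator
of `I` to a unit multiple of a Plücker relation. So `I` becomes prime once `T_∞` is inverted. This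
gives `T_∞ ∉ √I`, and also that `(ℂ[T]/I)[T_∞⁻¹] = ℂ[T][T_∞⁻¹] / I` is a domain.
-/

lemma notMem_radical_of_map_ne_top {R : Type*} [CommRing R] {I : Ideal R} {t : R}
    (h : I.map (algebraMap R (Localization.Away t)) ≠ ⊤) : t ∉ I.radical := by
  rintro ⟨m, hm⟩
  exact Set.disjoint_left.1
    ((IsLocalization.map_algebraMap_ne_top_iff_disjoint (Submonoid.powers t) _ I).1 h)
    ⟨m, rfl⟩ hm

lemma isDomain_localization_away_quotient {R : Type*} [CommRing R] {I : Ideal R} {t : R}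
    (h : (I.map (algebraMap R (Localization.Away t))).IsPrime) :
    IsDomain (Localization.Away (Ideal.Quotient.mk I t)) := by
  have hM : Algebra.algebraMapSubmonoid (R ⧸ I) (Submonoid.powers t) =
      Submonoid.powers (Ideal.Quotient.mk I t) := Submonoid.map_powers _ t
  have : IsLocalization (Submonoid.powers (Ideal.Quotient.mk I t))
      (Localization.Away t ⧸ I.map (algebraMap R (Localization.Away t))) := by
    rw [← hM]; infer_instance
  exact (IsLocalization.algEquiv (Submonoid.powers (Ideal.Quotient.mk I t)) _
    (Localization.Away t ⧸ I.map (algebraMap R (Localization.Away t)))).toMulEquiv.isDomain_iff.2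
    inferInstance

lemma MonomialOrder.sum_ne_zero_of_injOn_degree {σ R ι : Type*} [CommSemiring R]
    (m : MonomialOrder σ) {s : Finset ι} {f : ι → MvPolynomial σ R} (hs : ∃ i ∈ s, f i ≠ 0)
    (hd : Set.InjOn (m.degree ∘ f) s) : ∑ i ∈ s, f i ≠ 0 :=
  AddMonoidAlgebra.sum_ne_zero_of_injOn_supDegree' (D := m.toSyn) hs
    fun _ hi _ hj h => hd hi hj (congrArg m.toSyn.symm h)

lemma Set.Nonempty.exists_isLeast {α : Type*} [LinearOrder α] [WellFoundedLT α] {s : Set α}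
    (hs : s.Nonempty) : ∃ a, IsLeast s a :=
  ⟨wellFounded_lt.min s hs, wellFounded_lt.min_mem s hs, fun _ hx => wellFounded_lt.min_le hx⟩

section Rescale

variable {σ K : Type*} [CommRing K]

variable (K) in
abbrev AwayX (s₀ : σ) := Localization.Away (X s₀ : MvPolynomial σ K)

variable (K) in
noncomputable def awayUnit (s₀ : σ) : (AwayX K s₀)ˣ :=
  (IsLocalization.Away.algebraMap_isUnit (X s₀ : MvPolynomial σ K)).unit

variable {s₀ : σ}

@[simp] lemma coe_awayUnit :
    (awayUnit K s₀ : AwayX K s₀) = algebraMap (MvPolynomial σ K) _ (X s₀) := rfl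

noncomputable def rescale (e : σ → ℤ) : AwayX K s₀ →+* AwayX K s₀ :=
  Localization.awayLift
    (eval₂Hom (algebraMap K _) fun v =>
      ↑(awayUnit K s₀ ^ e v) * algebraMap (MvPolynomial σ K) (AwayX K s₀) (X v))
    (X s₀) (by
      rw [eval₂Hom_X', ← coe_awayUnit]
      exact (Units.isUnit _).mul (Units.isUnit _))

lemma rescale_algebraMap (e : σ → ℤ) (P : MvPolynomial σ K) :
    rescale e (algebraMap (MvPolynomial σ K) (AwayX K s₀) P) =
      eval₂ (algebraMap K _)
        (fun v => ↑(awayUnit K s₀ ^ e v) * algebraMap (MvPolynomial σ K) (AwayX K s₀) (X v)) P := by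
  unfold rescale
  exact IsLocalization.Away.lift_eq _ _ P

lemma rescale_algebraMap_C (e : σ → ℤ) (a : K) :
    rescale e (algebraMap (MvPolynomial σ K) (AwayX K s₀) (C a)) =
      algebraMap (MvPolynomial σ K) _ (C a) := by
  rw [rescale_algebraMap, eval₂_C, ← algebraMap_eq, ← IsScalarTower.algebraMap_apply]

lemma rescale_algebraMap_X (e : σ → ℤ) (v : σ) :
    rescale e (algebraMap (MvPolynomial σ K) (AwayX K s₀) (X v)) =
      ↑(awayUnit K s₀ ^ e v) * algebraMap (MvPolynomial σ K) _ (X v) := by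
  rw [rescale_algebraMap, eval₂_X]

lemma rescale_awayUnit {e : σ → ℤ} (he : e s₀ = 0) :
    rescale e (awayUnit K s₀ : AwayX K s₀) = awayUnit K s₀ := by
  simpa [he] using rescale_algebraMap_X (K := K) (s₀ := s₀) e s₀

lemma rescale_comp_rescale {e : σ → ℤ} (he : e s₀ = 0) (e' : σ → ℤ) :
    (rescale e).comp (rescale e') = (rescale (e + e') : AwayX K s₀ →+* _) := by
  refine IsLocalization.ringHom_ext (Submonoid.powers (X s₀)) (MvPolynomial.ringHom_ext
    (fun (a : K) => by simp [rescale_algebraMap_C]) fun v => ?_)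
  have hmap : Units.map (rescale e : AwayX K s₀ →+* AwayX K s₀).toMonoidHom (awayUnit K s₀) =
      awayUnit K s₀ :=
    Units.ext (rescale_awayUnit he)
  have hu : rescale e (↑(awayUnit K s₀ ^ e' v) : AwayX K s₀) = ↑(awayUnit K s₀ ^ e' v) := by
    have := congrArg Units.val (map_zpow
      (Units.map (rescale e : AwayX K s₀ →+* AwayX K s₀).toMonoidHom) (awayUnit K s₀) (e' v))
    rwa [hmap, Units.coe_map] at this
  simp only [RingHom.comp_apply, rescale_algebraMap_X, map_mul, hu, Pi.add_apply, zpow_add,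
    Units.val_mul]
  ring

lemma rescale_zero : (rescale 0 : AwayX K s₀ →+* _) = RingHom.id _ :=
  IsLocalization.ringHom_ext (Submonoid.powers (X s₀)) (MvPolynomial.ringHom_ext
    (fun (a : K) => by simp [rescale_algebraMap_C]) fun v => by simp [rescale_algebraMap_X])

lemma rescale_bijective {e : σ → ℤ} (he : e s₀ = 0) :
    Function.Bijective (rescale e : AwayX K s₀ →+* _) := by
  have inv : ∀ e : σ → ℤ, e s₀ = 0 → (rescale e).comp (rescale (-e)) = RingHom.id (AwayX K s₀) :=
    fun e he => by rw [rescale_comp_rescale he, add_neg_cancel, rescale_zero]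
  refine Function.bijective_iff_has_inverse.2 ⟨rescale (-e), fun x => ?_, fun x => ?_⟩
  · simpa using RingHom.congr_fun (inv (-e) (by simp [he])) x
  · exact RingHom.congr_fun (inv e he) x

end Rescale

namespace Plucker

variable {n : ℕ}

noncomputable def pluckerRel {i j k l : Fin n} (hij : i < j) (hjk : j < k) (hkl : k < l) :
    MvPolynomial (Idx n) ℂ :=
  W i j hij * W k l hkl - W i k (hij.trans hjk) * W j l (hjk.trans hkl)
    + W i l (hij.trans (hjk.trans hkl)) * W j k hjk

variable (n) in
def pluckerRels : Set (MvPolynomial (Idx n) ℂ) :=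
  {P | ∃ (i j k l : Fin n) (hij : i < j) (hjk : j < k) (hkl : k < l), P = pluckerRel hij hjk hkl}

def IsStandard (d : Idx n →₀ ℕ) : Prop :=
  ∀ p q : PIdx n, d (.inl p) ≠ 0 → d (.inl q) ≠ 0 → p.1 ≤ q.1 ∨ q.1 ≤ p.1

lemma IsStandard.tsub {d : Idx n →₀ ℕ} (hd : IsStandard d) (e : Idx n →₀ ℕ) :
    IsStandard (d - e) :=
  fun p q hp hq => hd p q (fun h => hp (by simp [h])) (fun h => hq (by simp [h]))

variable (n) in
noncomputable def standardSpan : Submodule ℂ (MvPolynomial (Idx n) ℂ) :=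
  restrictSupport ℂ {d | IsStandard d}

def pairWeight : Idx n → ℕ :=
  Sum.elim (fun p => ((p.1.2 : ℕ) - p.1.1) ^ 2) fun _ => 0

noncomputable def straighteningWeight : (Idx n →₀ ℕ) →ₗ[ℕ] ℕ :=
  Finsupp.linearCombination ℕ pairWeight

lemma straighteningWeight_single_add_single_add (P Q : Idx n) (d : Idx n →₀ ℕ) :
    straighteningWeight (Finsupp.single P 1 + Finsupp.single Q 1 + d) =
      pairWeight P + pairWeight Q + straighteningWeight d := by
  simp [straighteningWeight, Finsupp.linearCombination_single]

lemma nested_sq_lt {a c e b : ℕ} (hac : a < c) (hce : c < e) (heb : e < b) :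
    (e - a) ^ 2 + (b - c) ^ 2 < (b - a) ^ 2 + (e - c) ^ 2 ∧
      (c - a) ^ 2 + (b - e) ^ 2 < (b - a) ^ 2 + (e - c) ^ 2 := by
  obtain ⟨p, rfl⟩ := Nat.exists_eq_add_of_lt hac
  obtain ⟨q, rfl⟩ := Nat.exists_eq_add_of_lt hce
  obtain ⟨r, rfl⟩ := Nat.exists_eq_add_of_lt heb
  simp only [Nat.add_sub_cancel_left, add_assoc, Nat.add_sub_add_left]
  constructor <;> ring_nf <;> nlinarith

lemma exists_nested_of_not_isStandard {d : Idx n →₀ ℕ} (hd : ¬ IsStandard d) :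
    ∃ (a c e b : Fin n) (hac : a < c) (hce : c < e) (heb : e < b),
      d (.inl ⟨(a, b), hac.trans (hce.trans heb)⟩) ≠ 0 ∧ d (.inl ⟨(c, e), hce⟩) ≠ 0 := by
  have nested : ∀ p q : PIdx n, d (.inl p) ≠ 0 → d (.inl q) ≠ 0 →
      p.1.1 < q.1.1 → q.1.2 < p.1.2 → ∃ (a c e b : Fin n) (hac : a < c) (hce : c < e)
        (heb : e < b), d (.inl ⟨(a, b), hac.trans (hce.trans heb)⟩) ≠ 0 ∧
          d (.inl ⟨(c, e), hce⟩) ≠ 0 :=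
    fun ⟨(a, b), _⟩ ⟨(c, e), hce⟩ hp hq h₁ h₂ => ⟨a, c, e, b, h₁, hce, h₂, hp, hq⟩
  simp only [IsStandard, not_forall, Prod.le_def, not_or, not_and_or, not_le] at hd
  obtain ⟨p, q, hp, hq, h₁, h₂⟩ := hd
  rcases lt_trichotomy p.1.1 q.1.1 with h | h | h
  · exact nested p q hp hq h (by grind)
  · grind
  · exact nested q p hq hp h (by grind)

lemma monomial_single_add_single_add (P Q : Idx n) (d : Idx n →₀ ℕ) :
    (monomial (Finsupp.single P 1 + Finsupp.single Q 1 + d) 1 : MvPolynomial (Idx n) ℂ) =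
      X P * X Q * monomial d 1 := by
  rw [X, X, monomial_mul, monomial_mul, one_mul, one_mul]

lemma single_add_single_add_tsub {d : Idx n →₀ ℕ} {P Q : Idx n} (hP : d P ≠ 0) (hQ : d Q ≠ 0)
    (hPQ : P ≠ Q) :
    Finsupp.single P 1 + Finsupp.single Q 1 + (d - Finsupp.single P 1 - Finsupp.single Q 1) =
      d := by
  ext v
  simp only [Finsupp.add_apply, Finsupp.tsub_apply, Finsupp.single_apply]
  grind

lemma monomial_mem_standardSpan_sup (d : Idx n →₀ ℕ) :
    monomial d 1 ∈ standardSpan n ⊔ (Ideal.span (pluckerRels n)).restrictScalars ℂ := by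
  induction hw : straighteningWeight d using Nat.strong_induction_on generalizing d with
  | _ w ih =>
  by_cases hd : IsStandard d
  · exact Submodule.mem_sup_left (by simpa [standardSpan] using hd)
  obtain ⟨a, c, e, b, hac, hce, heb, hP, hQ⟩ := exists_nested_of_not_isStandard hd
  set P : Idx n := .inl ⟨(a, b), hac.trans (hce.trans heb)⟩
  set Q : Idx n := .inl ⟨(c, e), hce⟩
  set d' := d - Finsupp.single P 1 - Finsupp.single Q 1
  have hd' : Finsupp.single P 1 + Finsupp.single Q 1 + d' = d :=
    single_add_single_add_tsub hP hQ (by simp [P, Q, hac.ne])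
  have smaller : ∀ P' Q' : Idx n, pairWeight P' + pairWeight Q' < pairWeight P + pairWeight Q →
      X P' * X Q' * monomial d' 1 ∈
        standardSpan n ⊔ (Ideal.span (pluckerRels n)).restrictScalars ℂ := by
    intro P' Q' hlt
    rw [← monomial_single_add_single_add]
    refine ih _ ?_ _ rfl
    rw [← hw, ← hd', straighteningWeight_single_add_single_add,
      straighteningWeight_single_add_single_add]
    omega
  have hrel : pluckerRel hac hce heb * monomial d' 1 ∈
      standardSpan n ⊔ (Ideal.span (pluckerRels n)).restrictScalars ℂ :=
    Submodule.mem_sup_right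
      (Ideal.mul_mem_right _ _ (Ideal.subset_span ⟨a, c, e, b, hac, hce, heb, rfl⟩))
  have hlt := nested_sq_lt (a := a) (c := c) (e := e) (b := b) hac hce heb
  rw [← hd', monomial_single_add_single_add]
  -- `T_{ab} T_{ce} = pluckerRel - T_{ac} T_{eb} + T_{ae} T_{cb}`
  convert Submodule.add_mem _
    (Submodule.sub_mem _ hrel (smaller (.inl ⟨(a, c), hac⟩) (.inl ⟨(e, b), heb⟩)
      (by simpa [pairWeight, P, Q] using hlt.2)))
    (smaller (.inl ⟨(a, e), hac.trans hce⟩) (.inl ⟨(c, b), hce.trans heb⟩)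
      (by simpa [pairWeight, P, Q] using hlt.1)) using 1
  simp only [pluckerRel, W]
  ring

lemma mem_standardSpan_sup (F : MvPolynomial (Idx n) ℂ) :
    F ∈ standardSpan n ⊔ (Ideal.span (pluckerRels n)).restrictScalars ℂ := by
  rw [F.as_sum]
  refine Submodule.sum_mem _ fun d _ => ?_
  rw [← mul_one (coeff d F), ← smul_eq_mul, ← smul_monomial]
  exact Submodule.smul_mem _ _ (monomial_mem_standardSpan_sup d)

/-- The variables `x_i = inl i`, `y_j = inr j` and `s = ⊤` of the target of `pluckerMap`. In the
lex order the `x`'s come first, so `x_i y_j` leads `x_i y_j - x_j y_i` for `i < j`. -/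
abbrev PVar (n : ℕ) := WithTop (Fin n ⊕ₗ Fin n)

def xVar (i : Fin n) : PVar n := ↑(toLex (Sum.inl i) : Fin n ⊕ₗ Fin n)

def yVar (j : Fin n) : PVar n := ↑(toLex (Sum.inr j) : Fin n ⊕ₗ Fin n)

@[simp] lemma xVar_inj {i j : Fin n} : xVar i = xVar j ↔ i = j := by simp [xVar]

@[simp] lemma yVar_inj {i j : Fin n} : yVar i = yVar j ↔ i = j := by simp [yVar]

@[simp] lemma xVar_ne_yVar (i j : Fin n) : xVar i ≠ yVar j := by simp [xVar, yVar]

@[simp] lemma xVar_ne_top (i : Fin n) : xVar i ≠ ⊤ := WithTop.coe_ne_top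

@[simp] lemma yVar_ne_top (i : Fin n) : yVar i ≠ ⊤ := WithTop.coe_ne_top

lemma xVar_lt_xVar {i j : Fin n} (h : i < j) : xVar i < xVar j := by simp [xVar, h]

lemma xVar_lt_yVar (i j : Fin n) : xVar i < yVar j := by simp [xVar, yVar]

variable (n) in
noncomputable def pluckerMap : MvPolynomial (Idx n) ℂ →ₐ[ℂ] MvPolynomial (PVar n) ℂ :=
  aeval (Sum.elim (fun p => X (xVar p.1.1) * X (yVar p.1.2) - X (xVar p.1.2) * X (yVar p.1.1))
    fun _ => X ⊤)

@[simp] lemma pluckerMap_W (i j : Fin n) (h : i < j) :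
    pluckerMap n (W i j h) = X (xVar i) * X (yVar j) - X (xVar j) * X (yVar i) := by
  simp [pluckerMap, W]

@[simp] lemma pluckerMap_Tinf : pluckerMap n Tinf = X ⊤ := by
  simp [pluckerMap, Tinf]

lemma span_pluckerRels_le_ker : Ideal.span (pluckerRels n) ≤ RingHom.ker (pluckerMap n) := by
  rw [Ideal.span_le]
  rintro _ ⟨i, j, k, l, hij, hjk, hkl, rfl⟩
  simp only [SetLike.mem_coe, RingHom.mem_ker, pluckerRel, map_add, map_sub, map_mul,
    pluckerMap_W]
  ring

noncomputable def leadVar : Idx n → PVar n →₀ ℕ :=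
  Sum.elim (fun p => Finsupp.single (xVar p.1.1) 1 + Finsupp.single (yVar p.1.2) 1)
    fun _ => Finsupp.single ⊤ 1

noncomputable def leadExp : (Idx n →₀ ℕ) →ₗ[ℕ] PVar n →₀ ℕ :=
  Finsupp.linearCombination ℕ leadVar

open MonomialOrder

lemma lex_degree_X_mul_X (a b : PVar n) :
    lex.degree (X a * X b : MvPolynomial (PVar n) ℂ) = Finsupp.single a 1 + Finsupp.single b 1 := by
  rw [degree_mul (X_ne_zero a) (X_ne_zero b), degree_X, degree_X]

lemma lex_degree_minor {i j : Fin n} (hij : i < j) :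
    lex.degree (X (xVar i) * X (yVar j) - X (xVar j) * X (yVar i) : MvPolynomial (PVar n) ℂ) =
      Finsupp.single (xVar i) 1 + Finsupp.single (yVar j) 1 := by
  rw [degree_sub_of_lt, lex_degree_X_mul_X]
  rw [lex_degree_X_mul_X, lex_degree_X_mul_X, lex_lt_iff, Finsupp.Lex.lt_iff]
  refine ⟨xVar i, fun b hb => ?_, by simp [hij.ne']⟩
  have h₁ := hb.trans (xVar_lt_xVar hij)
  have h₂ := hb.trans (xVar_lt_yVar i i)
  have h₃ := hb.trans (xVar_lt_yVar i j)
  simp [hb.ne', h₁.ne', h₂.ne', h₃.ne']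

lemma lex_degree_pluckerMap_X (v : Idx n) : lex.degree (pluckerMap n (X v)) = leadVar v := by
  rcases v with ⟨⟨i, j⟩, hij⟩ | _
  · exact (congrArg lex.degree (pluckerMap_W i j hij)).trans (lex_degree_minor hij)
  · simp [leadVar, pluckerMap, degree_X]

lemma pluckerMap_X_ne_zero (v : Idx n) : pluckerMap n (X v) ≠ 0 := by
  refine ne_zero_of_degree_ne_zero (m := lex) ?_
  rw [lex_degree_pluckerMap_X]
  rcases v with p | _ <;> simp [leadVar]

lemma pluckerMap_monomial (d : Idx n →₀ ℕ) :
    pluckerMap n (monomial d 1) = ∏ v ∈ d.support, pluckerMap n (X v) ^ d v := by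
  rw [monomial_eq, map_one, one_mul, Finsupp.prod, map_prod]
  simp_rw [map_pow]

lemma pluckerMap_monomial_ne_zero (d : Idx n →₀ ℕ) : pluckerMap n (monomial d 1) ≠ 0 := by
  rw [pluckerMap_monomial]
  exact Finset.prod_ne_zero_iff.2 fun v _ => pow_ne_zero _ (pluckerMap_X_ne_zero v)

lemma lex_degree_pluckerMap_monomial (d : Idx n →₀ ℕ) :
    lex.degree (pluckerMap n (monomial d 1)) = leadExp d := by
  rw [pluckerMap_monomial, degree_prod fun v _ => pow_ne_zero _ (pluckerMap_X_ne_zero v)]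
  simp_rw [degree_pow, lex_degree_pluckerMap_X]
  rfl

lemma leadExp_apply (d : Idx n →₀ ℕ) (a : PVar n) :
    leadExp d a = ∑ v ∈ d.support, d v * leadVar v a := by
  simp [leadExp, Finsupp.linearCombination_apply, Finsupp.sum, Finsupp.finsetSum_apply]

lemma leadExp_apply_top (d : Idx n →₀ ℕ) : leadExp d ⊤ = d (.inr ()) := by
  rw [leadExp_apply, Finset.sum_eq_single (.inr ())]
  · simp [leadVar]
  · rintro (p | _) _ hv <;> simp_all [leadVar]
  · simp_all

lemma leadExp_apply_xVar_ne_zero_iff (d : Idx n →₀ ℕ) (i : Fin n) :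
    leadExp d (xVar i) ≠ 0 ↔ ∃ p : PIdx n, d (.inl p) ≠ 0 ∧ p.1.1 = i := by
  rw [leadExp_apply, ne_eq, Finset.sum_eq_zero_iff]
  push Not
  constructor
  · rintro ⟨p | _, hv, hne⟩
    · exact ⟨p, by simpa using hv, by simp_all [leadVar, Finsupp.single_apply]⟩
    · simp [leadVar] at hne
  · rintro ⟨p, hp, rfl⟩
    exact ⟨.inl p, by simpa using hp, by simpa [leadVar, Finsupp.single_apply] using hp⟩

lemma leadExp_apply_yVar_ne_zero_iff (d : Idx n →₀ ℕ) (j : Fin n) :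
    leadExp d (yVar j) ≠ 0 ↔ ∃ p : PIdx n, d (.inl p) ≠ 0 ∧ p.1.2 = j := by
  rw [leadExp_apply, ne_eq, Finset.sum_eq_zero_iff]
  push Not
  constructor
  · rintro ⟨p | _, hv, hne⟩
    · exact ⟨p, by simpa using hv, by simp_all [leadVar, Finsupp.single_apply]⟩
    · simp [leadVar] at hne
  · rintro ⟨p, hp, rfl⟩
    exact ⟨.inl p, by simpa using hp, by simpa [leadVar, Finsupp.single_apply] using hp⟩

lemma IsStandard.exists_apply_ne_zero_of_isLeast {d : Idx n →₀ ℕ} (hd : IsStandard d)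
    {i₀ j₀ : Fin n} (hi : IsLeast {i | leadExp d (xVar i) ≠ 0} i₀)
    (hj : IsLeast {j | leadExp d (yVar j) ≠ 0} j₀) :
    ∃ p : PIdx n, d (.inl p) ≠ 0 ∧ p.1 = (i₀, j₀) := by
  obtain ⟨p, hp, hpi⟩ := (leadExp_apply_xVar_ne_zero_iff d i₀).1 hi.1
  obtain ⟨q, hq, hqj⟩ := (leadExp_apply_yVar_ne_zero_iff d j₀).1 hj.1
  have hp₂ : j₀ ≤ p.1.2 := hj.2 ((leadExp_apply_yVar_ne_zero_iff d _).2 ⟨p, hp, rfl⟩)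
  have hq₁ : i₀ ≤ q.1.1 := hi.2 ((leadExp_apply_xVar_ne_zero_iff d _).2 ⟨q, hq, rfl⟩)
  rcases hd p q hp hq with h | h
  · exact ⟨p, hp, Prod.ext hpi (le_antisymm (hqj ▸ h.2) hp₂)⟩
  · exact ⟨q, hq, Prod.ext (le_antisymm (hpi ▸ h.1) hq₁) hqj⟩

lemma IsStandard.exists_common_of_leadExp_eq {d₁ d₂ : Idx n →₀ ℕ} (h₁ : IsStandard d₁)
    (h₂ : IsStandard d₂) (he : leadExp d₁ = leadExp d₂) (hne : d₁ ≠ 0) :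
    ∃ v, d₁ v ≠ 0 ∧ d₂ v ≠ 0 := by
  by_cases htop : d₁ (.inr ()) ≠ 0
  · refine ⟨.inr (), htop, ?_⟩
    rwa [← leadExp_apply_top, ← he, leadExp_apply_top]
  obtain ⟨p | _, hp⟩ := Finsupp.ne_iff.1 hne
  swap; · simp_all
  obtain ⟨i₀, hi⟩ := Set.Nonempty.exists_isLeast (s := {i | leadExp d₁ (xVar i) ≠ 0})
    ⟨p.1.1, (leadExp_apply_xVar_ne_zero_iff d₁ _).2 ⟨p, hp, rfl⟩⟩
  obtain ⟨j₀, hj⟩ := Set.Nonempty.exists_isLeast (s := {j | leadExp d₁ (yVar j) ≠ 0})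
    ⟨p.1.2, (leadExp_apply_yVar_ne_zero_iff d₁ _).2 ⟨p, hp, rfl⟩⟩
  obtain ⟨q₁, hq₁, hq₁e⟩ := h₁.exists_apply_ne_zero_of_isLeast hi hj
  rw [he] at hi hj
  obtain ⟨q₂, hq₂, hq₂e⟩ := h₂.exists_apply_ne_zero_of_isLeast hi hj
  obtain rfl : q₁ = q₂ := Subtype.ext (hq₁e.trans hq₂e.symm)
  exact ⟨.inl q₁, hq₁, hq₂⟩

theorem leadExp_injOn : Set.InjOn leadExp {d : Idx n →₀ ℕ | IsStandard d} := by
  intro d₁ h₁ d₂ h₂ he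
  induction hN : d₁.degree generalizing d₁ d₂ with
  | zero =>
    obtain rfl : d₁ = 0 := (Finsupp.degree_eq_zero_iff _).1 hN
    by_contra hne
    obtain ⟨v, -, hv⟩ := IsStandard.exists_common_of_leadExp_eq h₂ h₁ he.symm (Ne.symm hne)
    exact hv rfl
  | succ N ih =>
    obtain ⟨v, hv₁, hv₂⟩ := IsStandard.exists_common_of_leadExp_eq h₁ h₂ he
      (by rintro rfl; simp at hN)
    rw [← Finsupp.sub_add_single_one_cancel hv₁, ← Finsupp.sub_add_single_one_cancel hv₂] at he ⊢
    rw [map_add, map_add] at he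
    rw [ih (h₁.tsub _) (h₂.tsub _) (add_right_cancel he)]
    rw [← Finsupp.sub_add_single_one_cancel hv₁, map_add, Finsupp.degree_single] at hN
    omega

lemma pluckerMap_eq_sum (F : MvPolynomial (Idx n) ℂ) :
    pluckerMap n F = ∑ d ∈ F.support, coeff d F • pluckerMap n (monomial d 1) := by
  conv_lhs => rw [F.as_sum]
  rw [map_sum]
  refine Finset.sum_congr rfl fun d _ => ?_
  rw [← map_smul, smul_monomial, smul_eq_mul, mul_one]

theorem eq_zero_of_mem_standardSpan_of_pluckerMap_eq_zero {F : MvPolynomial (Idx n) ℂ}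
    (hF : F ∈ standardSpan n) (h : pluckerMap n F = 0) : F = 0 := by
  by_contra hne
  refine sum_ne_zero_of_injOn_degree lex ?_ ?_ (pluckerMap_eq_sum F ▸ h)
  · obtain ⟨d, hd⟩ := support_nonempty.2 hne
    exact ⟨d, hd, smul_ne_zero (mem_support_iff.1 hd) (pluckerMap_monomial_ne_zero d)⟩
  · intro d₁ hd₁ d₂ hd₂ he
    simp only [Function.comp_apply,
      degree_smul_of_isRegular (IsUnit.mk0 _ (mem_support_iff.1 hd₁)).isRegular,
      degree_smul_of_isRegular (IsUnit.mk0 _ (mem_support_iff.1 hd₂)).isRegular,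
      lex_degree_pluckerMap_monomial] at he
    exact leadExp_injOn (hF hd₁) (hF hd₂) he

theorem ker_pluckerMap : RingHom.ker (pluckerMap n) = Ideal.span (pluckerRels n) := by
  refine le_antisymm (fun F hF => ?_) span_pluckerRels_le_ker
  obtain ⟨G, hG, H, hH, rfl⟩ := Submodule.mem_sup.1 (mem_standardSpan_sup F)
  have hH₀ : pluckerMap n H = 0 := span_pluckerRels_le_ker hH
  have hG₀ : pluckerMap n G = 0 := by
    rw [RingHom.mem_ker, map_add, hH₀, add_zero] at hF
    exact hF
  rw [eq_zero_of_mem_standardSpan_of_pluckerMap_eq_zero hG hG₀, zero_add]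
  exact hH

lemma isPrime_map_span_pluckerRels :
    ((Ideal.span (pluckerRels n)).map (algebraMap _ (AwayX ℂ (Sum.inr () : Idx n)))).IsPrime := by
  refine IsLocalization.isPrime_of_isPrime_disjoint (Submonoid.powers (X (.inr ()))) _ _ ?_ ?_
  · rw [← ker_pluckerMap]
    exact RingHom.ker_isPrime _
  · refine Set.disjoint_left.2 ?_
    rintro _ ⟨m, rfl⟩ hm
    rw [← ker_pluckerMap, SetLike.mem_coe, RingHom.mem_ker, map_pow,
      show (X (.inr ()) : MvPolynomial (Idx n) ℂ) = Tinf from rfl, pluckerMap_Tinf] at hm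
    exact pow_ne_zero m (X_ne_zero _) hm

variable (n) in
def smallPairWeight (c : ℕ) : Idx n → ℤ :=
  Sum.elim (fun p => if (p.1.2 : ℕ) < c then -1 else 0) fun _ => 0

lemma rescale_algebraMap_W (c : ℕ) {i j : Fin n} (h : i < j) :
    rescale (smallPairWeight n c)
        (algebraMap (MvPolynomial (Idx n) ℂ) (AwayX ℂ (Sum.inr () : Idx n)) (W i j h)) =
      (if (j : ℕ) < c then ↑(awayUnit ℂ (Sum.inr () : Idx n))⁻¹ else 1) *
        algebraMap (MvPolynomial (Idx n) ℂ) _ (W i j h) := by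
  rw [W, rescale_algebraMap_X]
  split_ifs <;> simp [smallPairWeight, *]

lemma rescale_algebraMap_Tinf (c : ℕ) :
    rescale (smallPairWeight n c)
        (algebraMap (MvPolynomial (Idx n) ℂ) (AwayX ℂ (Sum.inr () : Idx n)) Tinf) =
      algebraMap (MvPolynomial (Idx n) ℂ) _ Tinf := by
  rw [Tinf, rescale_algebraMap_X]
  simp [smallPairWeight]

noncomputable def iGen (c : ℕ) {i j k l : Fin n} (hij : i < j) (hjk : j < k) (hkl : k < l) :
    MvPolynomial (Idx n) ℂ :=
  if (j : ℕ) < c ∧ c ≤ (k : ℕ) then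
    Tinf * W i j hij * W k l hkl - W i k (hij.trans hjk) * W j l (hjk.trans hkl)
      + W i l (hij.trans (hjk.trans hkl)) * W j k hjk
  else pluckerRel hij hjk hkl

lemma mem_IGens_iff {c : ℕ} {P : MvPolynomial (Idx n) ℂ} :
    P ∈ IGens c n ↔ ∃ (i j k l : Fin n) (hij : i < j) (hjk : j < k) (hkl : k < l),
      P = iGen c hij hjk hkl := by
  simp only [IGens, iGen, pluckerRel, eq_ite_iff, Set.mem_ofPred_eq]

/-- Each `T_{pq}` with `q ≤ c` picks up a factor `T_∞⁻¹`. The three terms of a Plücker relation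
contain equally many such variables, except when `j ≤ c < k`, where only `T_{ij}` does and the
factor `T_∞` in front of `T_{ij} T_{kl}` cancels it. -/
lemma rescale_algebraMap_iGen (c : ℕ) {i j k l : Fin n} (hij : i < j) (hjk : j < k)
    (hkl : k < l) : ∃ a : (AwayX ℂ (Sum.inr () : Idx n))ˣ,
      rescale (smallPairWeight n c) (algebraMap (MvPolynomial (Idx n) ℂ)
          (AwayX ℂ (Sum.inr () : Idx n)) (iGen c hij hjk hkl)) =
        a * algebraMap (MvPolynomial (Idx n) ℂ) _ (pluckerRel hij hjk hkl) := by
  have hij' := Fin.lt_def.1 hij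
  have hjk' := Fin.lt_def.1 hjk
  have hkl' := Fin.lt_def.1 hkl
  set u := awayUnit ℂ (Sum.inr () : Idx n)
  have hu : algebraMap (MvPolynomial (Idx n) ℂ) (AwayX ℂ (Sum.inr () : Idx n)) Tinf * ↑u⁻¹ = 1 :=
    u.mul_inv
  simp only [iGen, pluckerRel, apply_ite (algebraMap _ _), apply_ite (rescale _), map_sub,
    map_add, map_mul, rescale_algebraMap_W, rescale_algebraMap_Tinf]
  by_cases hk : (k : ℕ) < c
  · by_cases hl : (l : ℕ) < c
    · refine ⟨u⁻¹ ^ 2, ?_⟩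
      simp only [show (j : ℕ) < c by omega, hk, hl, if_true, true_and,
        show ¬ c ≤ (k : ℕ) by omega, if_false, Units.val_pow_eq_pow_val]
      ring
    · refine ⟨u⁻¹, ?_⟩
      simp only [show (j : ℕ) < c by omega, hk, hl, show ¬ c ≤ (k : ℕ) by omega, if_true,
        if_false, and_false]
      ring
  · by_cases hj : (j : ℕ) < c
    · refine ⟨1, ?_⟩
      simp only [hj, hk, show ¬ (l : ℕ) < c by omega, show c ≤ (k : ℕ) by omega, if_true,
        if_false, and_self, Units.val_one]
      linear_combination (algebraMap _ _ (W i j hij) * algebraMap _ _ (W k l hkl)) * hu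
    · refine ⟨1, ?_⟩
      simp only [hj, hk, show ¬ (l : ℕ) < c by omega, if_false, false_and, Units.val_one]
      ring

lemma map_rescale_map_span_IGens (c : ℕ) :
    ((Ideal.span (IGens c n)).map (algebraMap _ (AwayX ℂ (Sum.inr () : Idx n)))).map
        (rescale (smallPairWeight n c)) =
      (Ideal.span (pluckerRels n)).map (algebraMap _ (AwayX ℂ (Sum.inr () : Idx n))) := by
  rw [Ideal.map_map, Ideal.map_span, Ideal.map_span]
  apply le_antisymm <;> rw [Ideal.span_le]
  · rintro _ ⟨P, hP, rfl⟩
    obtain ⟨i, j, k, l, hij, hjk, hkl, rfl⟩ := mem_IGens_iff.1 hP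
    obtain ⟨a, ha⟩ := rescale_algebraMap_iGen c hij hjk hkl
    rw [SetLike.mem_coe, RingHom.comp_apply, ha]
    exact Ideal.mul_mem_left _ _ (Ideal.subset_span ⟨_, ⟨i, j, k, l, hij, hjk, hkl, rfl⟩, rfl⟩)
  · rintro _ ⟨_, ⟨i, j, k, l, hij, hjk, hkl, rfl⟩, rfl⟩
    obtain ⟨a, ha⟩ := rescale_algebraMap_iGen c hij hjk hkl
    rw [SetLike.mem_coe, ← a.inv_mul_cancel_left (algebraMap _ _ _), ← ha]
    exact Ideal.mul_mem_left _ _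
      (Ideal.subset_span ⟨_, mem_IGens_iff.2 ⟨i, j, k, l, hij, hjk, hkl, rfl⟩, rfl⟩)

theorem isPrime_map_span_IGens (c n : ℕ) :
    ((Ideal.span (IGens c n)).map
      (algebraMap _ (Localization.Away (Tinf : MvPolynomial (Idx n) ℂ)))).IsPrime := by
  have h := isPrime_map_span_pluckerRels.comap (rescale (smallPairWeight n c))
  rwa [← map_rescale_map_span_IGens c,
    Ideal.comap_map_of_bijective _ (rescale_bijective (e := smallPairWeight n c) rfl)] at h

end Plucker

theorem stmt_9_general (c d : ℕ) :
    Tinf ∉ (Ideal.span (IGens c (c + d))).radical ∧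
    IsDomain (Localization.Away
      (Ideal.Quotient.mk (Ideal.span (IGens c (c + d))) Tinf)) :=
  ⟨notMem_radical_of_map_ne_top (Plucker.isPrime_map_span_IGens c (c + d)).ne_top,
    isDomain_localization_away_quotient (Plucker.isPrime_map_span_IGens c (c + d))⟩

/-- For `c, d > 2` and `n = c + d`, the variable `T_∞` is not contained in the radical of
the ideal `I`, and the localization of `ℂ[T_{ij}, T_∞]/I` at (the class of) `T_∞`
is an integral domain. -/
theorem stmt_9 (c d : ℕ) (hc : 2 < c) (hd : 2 < d) :
    Tinf ∉ (Ideal.span (IGens c (c + d))).radical ∧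
    IsDomain (Localization.Away
      (Ideal.Quotient.mk (Ideal.span (IGens c (c + d))) Tinf)) :=
  stmt_9_general c d
end

section
/- Let c, d > 2 and n = c+d. The class of T_∞ is a prime element in R = ℂ[T_{ij}, T_∞]/I, i.e., R/(T_∞) ≅ ℂ[T_{ij}, T_∞]/J is an integral domain. -/
open MvPolynomial

/-!
Let `Φ = aeval (param c n)` send `T_∞ ↦ 0` and `T_{ij} ↦ x_i y_j - x_j y_i`, the second term
being dropped when `i ≤ c < j`; it kills `J`. Straightening along the weight `∑ (j - i)²` writes
every polynomial, modulo `J`, as a combination of monomials in the `T_{ij}` containing no nested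
pair `T_{il} T_{jk}` (`i < j < k < l`). In the lexicographic order the leading monomial of
`Φ(T_{ij})` is `x_i y_j`, and a non-nesting family of chords is determined by its multisets of
left and right ends, so the images of these monomials have distinct leading monomials and are
linearly independent. Hence `J = ker Φ` is prime. Finally `J = I + (T_∞)` and `T_∞ ∉ I`, so
`T_∞` is prime in `R/I`.
-/

theorem Finsupp.exists_eq_single_add {α : Type*} {m : α →₀ ℕ} {a : α}
    (ha : a ∈ m.support) : ∃ r, m = Finsupp.single a 1 + r :=
  exists_add_of_le (Finsupp.single_le_iff.mpr (Nat.one_le_iff_ne_zero.mpr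
    (Finsupp.mem_support_iff.mp ha)))

theorem MonomialOrder.degree_X_mul_X {σ R : Type*} [CommSemiring R] [NoZeroDivisors R]
    [Nontrivial R] (m : MonomialOrder σ) (a b : σ) :
    m.degree (X a * X b : MvPolynomial σ R) = Finsupp.single a 1 + Finsupp.single b 1 := by
  rw [m.degree_mul (X_ne_zero a) (X_ne_zero b), m.degree_X, m.degree_X]

theorem MonomialOrder.linearIndependent_of_injective_degree {σ ι R : Type*} [CommRing R]
    [NoZeroDivisors R] (m : MonomialOrder σ) {f : ι → MvPolynomial σ R} (hf : ∀ i, f i ≠ 0)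
    (hinj : Function.Injective fun i => m.degree (f i)) : LinearIndependent R f := by
  classical
  rw [linearIndependent_iff]
  intro l hl
  by_contra hl0
  obtain ⟨i₀, hi₀, hmax⟩ := l.support.exists_max_image (fun i => m.toSyn (m.degree (f i)))
    (Finsupp.support_nonempty_iff.mpr hl0)
  have hcoeff := congrArg (coeff (m.degree (f i₀))) hl
  rw [Finsupp.linearCombination_apply, Finsupp.sum, coeff_sum,
    Finset.sum_eq_single i₀ (fun j hj hji => ?_) (fun h => absurd hi₀ h), coeff_smul,
    coeff_zero, smul_eq_mul] at hcoeff
  · exact mul_ne_zero (Finsupp.mem_support_iff.mp hi₀) (m.coeff_degree_ne_zero_iff.mpr (hf i₀))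
      hcoeff
  · have hlt : m.toSyn (m.degree (f j)) < m.toSyn (m.degree (f i₀)) :=
      lt_of_le_of_ne (hmax j hj) (m.toSyn.injective.ne (hinj.ne hji))
    rw [coeff_smul, m.coeff_eq_zero_of_lt hlt, smul_zero]

theorem Ideal.prime_mk_of_isDomain_quotient_sup {R : Type*} [CommRing R] {I : Ideal R} {x : R}
    (hx : x ∉ I) (h : IsDomain (R ⧸ I ⊔ Ideal.span {x})) :
    Prime (Ideal.Quotient.mk I x) := by
  rw [← Ideal.span_singleton_prime (mt Ideal.Quotient.eq_zero_iff_mem.mp hx),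
    ← Set.image_singleton, ← Ideal.map_span, ← Ideal.Quotient.isDomain_iff_prime]
  let e := DoubleQuot.quotQuotEquivQuotSup I (Ideal.span {x})
  exact e.injective.isDomain e.toRingHom

namespace PluckerDegeneration

variable {n : ℕ}

/-- `X (toLex (t, 0))` and `X (toLex (t, 1))` are the variables `x_t` and `y_t`; the
lexicographic order on monomials then compares exponents of `x_0, y_0, x_1, y_1, …` in turn. -/
abbrev Var (n : ℕ) := Lex (Fin n × Fin 2)

noncomputable def param (c n : ℕ) : Idx n → MvPolynomial (Var n) ℂ
  | Sum.inl p => X (toLex (p.1.1, 0)) * X (toLex (p.1.2, 1)) -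
      if p.1.1.val < c ∧ c ≤ p.1.2.val then 0 else X (toLex (p.1.2, 0)) * X (toLex (p.1.1, 1))
  | Sum.inr _ => 0

theorem aeval_param_of_mem_JGens {c : ℕ} {g : MvPolynomial (Idx n) ℂ} (hg : g ∈ JGens c n) :
    aeval (param c n) g = 0 := by
  rcases hg with rfl | ⟨i, j, k, l, hij, hjk, hkl, ⟨hmix, rfl⟩ | ⟨hmix, rfl⟩⟩
  · simp [Tinf, param]
  all_goals
    simp only [W, map_add, map_sub, map_mul, map_neg, aeval_X, param]
    have : i.val < j.val := hij
    have : j.val < k.val := hjk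
    have : k.val < l.val := hkl
    split_ifs <;> first | omega | ring

noncomputable def chordExp (p : PIdx n) : Var n →₀ ℕ :=
  Finsupp.single (toLex (p.1.1, 0)) 1 + Finsupp.single (toLex (p.1.2, 1)) 1

theorem degree_param (c : ℕ) (p : PIdx n) :
    MonomialOrder.lex.degree (param c n (Sum.inl p)) = chordExp p := by
  simp only [param]
  split_ifs
  · rw [sub_zero, MonomialOrder.lex.degree_X_mul_X, chordExp]
  rw [MonomialOrder.degree_sub_of_lt, MonomialOrder.lex.degree_X_mul_X, chordExp]
  rw [MonomialOrder.lex.degree_X_mul_X, MonomialOrder.lex.degree_X_mul_X,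
    MonomialOrder.lex_lt_iff]
  have hp : p.1.1 < p.1.2 := p.2
  -- the variable `x_{p.1}` is the first in which the two monomials differ
  refine ⟨toLex (p.1.1, 0), fun z hz => ?_, ?_⟩
  · have hz' : (ofLex z).1 < p.1.1 := by
      rcases Prod.Lex.lt_iff.mp hz with h | ⟨-, h⟩
      · exact h
      · exact absurd h (Fin.not_lt_zero _)
    have hne : ∀ t s, t = p.1.1 ∨ t = p.1.2 → toLex (t, s) ≠ z := by
      rintro t s (rfl | rfl) rfl
      · simp at hz'
      · simp at hz'
        omega
    simp [hne]
  · simp [hp.ne']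

theorem param_ne_zero (c : ℕ) (p : PIdx n) : param c n (Sum.inl p) ≠ 0 := by
  refine MonomialOrder.lex.ne_zero_of_degree_ne_zero ?_
  rw [degree_param, chordExp]
  simp

/-- The leading exponent of `Φ(m)`: its `(t, 0)` and `(t, 1)` entries count the chords `T_{ij}`
of `m` with `i = t`, respectively `j = t`. -/
noncomputable def endpoints : (Idx n →₀ ℕ) →ₗ[ℕ] (Var n →₀ ℕ) :=
  Finsupp.linearCombination ℕ (Sum.elim chordExp 0)

theorem degree_aeval_param_monomial (c : ℕ) {m : Idx n →₀ ℕ} (hm : m (Sum.inr ()) = 0) :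
    MonomialOrder.lex.degree (aeval (param c n) (monomial m (1 : ℂ))) = endpoints m ∧
      aeval (param c n) (monomial m (1 : ℂ)) ≠ 0 := by
  have hfac : ∀ q ∈ m.support, param c n q ≠ 0 ∧
      MonomialOrder.lex.degree (param c n q ^ m q) = m q • Sum.elim chordExp 0 q := by
    rintro (p | u) hq
    · exact ⟨param_ne_zero c p, by rw [MonomialOrder.degree_pow, degree_param]; rfl⟩
    · exact absurd hm (Finsupp.mem_support_iff.mp hq)
  rw [aeval_monomial, map_one, one_mul, Finsupp.prod]
  refine ⟨?_, Finset.prod_ne_zero_iff.mpr fun q hq => pow_ne_zero _ (hfac q hq).1⟩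
  rw [MonomialOrder.degree_prod (fun q hq => pow_ne_zero _ (hfac q hq).1), endpoints,
    Finsupp.linearCombination_apply, Finsupp.sum]
  exact Finset.sum_congr rfl fun q hq => (hfac q hq).2

def Nested (p q : PIdx n) : Prop := p.1.1 < q.1.1 ∧ q.1.2 < p.1.2

def IsStandard (m : Idx n →₀ ℕ) : Prop :=
  m (Sum.inr ()) = 0 ∧
    ∀ p q : PIdx n, Sum.inl p ∈ m.support → Sum.inl q ∈ m.support → ¬ Nested p q

theorem IsStandard.mono {m m' : Idx n →₀ ℕ} (hm : IsStandard m) (h : m' ≤ m) :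
    IsStandard m' := by
  have hsupp := Finsupp.support_mono h
  exact ⟨Nat.eq_zero_of_le_zero (hm.1 ▸ h _), fun p q hp hq => hm.2 p q (hsupp hp) (hsupp hq)⟩

theorem endpoints_ne_zero_iff {m : Idx n →₀ ℕ} {z : Var n} :
    endpoints m z ≠ 0 ↔ ∃ q ∈ m.support, Sum.elim chordExp 0 q z ≠ 0 := by
  simp [endpoints, Finsupp.linearCombination_apply, Finsupp.sum, Finset.sum_eq_zero_iff]

theorem endpoints_left_ne_zero_iff {m : Idx n →₀ ℕ} {t : Fin n} :
    endpoints m (toLex (t, 0)) ≠ 0 ↔ ∃ p : PIdx n, Sum.inl p ∈ m.support ∧ p.1.1 = t := by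
  rw [endpoints_ne_zero_iff]
  constructor
  · rintro ⟨p | u, hp, h⟩
    · exact ⟨p, hp, by simpa [chordExp, Finsupp.single_apply] using h⟩
    · simp at h
  · rintro ⟨p, hp, rfl⟩
    exact ⟨_, hp, by simp [chordExp]⟩

theorem endpoints_right_ne_zero_iff {m : Idx n →₀ ℕ} {t : Fin n} :
    endpoints m (toLex (t, 1)) ≠ 0 ↔ ∃ p : PIdx n, Sum.inl p ∈ m.support ∧ p.1.2 = t := by
  rw [endpoints_ne_zero_iff]
  constructor
  · rintro ⟨p | u, hp, h⟩
    · exact ⟨p, hp, by simpa [chordExp, Finsupp.single_apply] using h⟩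
    · simp at h
  · rintro ⟨p, hp, rfl⟩
    exact ⟨_, hp, by simp [chordExp]⟩

theorem exists_chord_of_minimal {m : Idx n →₀ ℕ} (hm : IsStandard m) {a b : Fin n}
    (ha : endpoints m (toLex (a, 0)) ≠ 0) (hb : endpoints m (toLex (b, 1)) ≠ 0)
    (ha_min : ∀ t, endpoints m (toLex (t, 0)) ≠ 0 → ¬ t < a)
    (hb_min : ∀ t, endpoints m (toLex (t, 1)) ≠ 0 → ¬ t < b) :
    ∃ p : PIdx n, Sum.inl p ∈ m.support ∧ p.1 = (a, b) := by
  obtain ⟨p, hp, rfl⟩ := endpoints_left_ne_zero_iff.mp ha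
  obtain ⟨q, hq, rfl⟩ := endpoints_right_ne_zero_iff.mp hb
  by_cases hpb : p.1.2 = q.1.2
  · exact ⟨p, hp, Prod.ext rfl hpb⟩
  by_cases hqa : q.1.1 = p.1.1
  · exact ⟨q, hq, Prod.ext hqa rfl⟩
  have hpq : p.1.1 < q.1.1 :=
    (not_lt.mp (ha_min _ (endpoints_left_ne_zero_iff.mpr ⟨q, hq, rfl⟩))).lt_of_ne' hqa
  have hqp : q.1.2 < p.1.2 :=
    (not_lt.mp (hb_min _ (endpoints_right_ne_zero_iff.mpr ⟨p, hp, rfl⟩))).lt_of_ne' hpb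
  exact absurd ⟨hpq, hqp⟩ (hm.2 p q hp hq)

theorem IsStandard.eq_of_endpoints_eq {m m' : Idx n →₀ ℕ} (hm : IsStandard m)
    (hm' : IsStandard m') (h : endpoints m = endpoints m') : m = m' := by
  induction hd : m.degree using Nat.strong_induction_on generalizing m m' with
  | _ d ih =>
  have chord_of_ne_zero : ∀ {m : Idx n →₀ ℕ}, IsStandard m → m ≠ 0 →
      ∃ p : PIdx n, Sum.inl p ∈ m.support := by
    intro m hm hm0
    obtain ⟨p | u, hp⟩ := Finsupp.support_nonempty_iff.mpr hm0
    · exact ⟨p, hp⟩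
    · exact absurd hm.1 (Finsupp.mem_support_iff.mp hp)
  rcases eq_or_ne m' 0 with rfl | hm'0
  · by_contra hm0
    obtain ⟨p, hp⟩ := chord_of_ne_zero hm hm0
    exact endpoints_left_ne_zero_iff.mpr ⟨p, hp, rfl⟩ (by rw [h, map_zero]; rfl)
  obtain ⟨p, hp⟩ := chord_of_ne_zero hm' hm'0
  obtain ⟨a, ha, ha_min⟩ := wellFounded_lt.has_min {t | endpoints m' (toLex (t, 0)) ≠ 0}
    ⟨_, endpoints_left_ne_zero_iff.mpr ⟨p, hp, rfl⟩⟩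
  obtain ⟨b, hb, hb_min⟩ := wellFounded_lt.has_min {t | endpoints m' (toLex (t, 1)) ≠ 0}
    ⟨_, endpoints_right_ne_zero_iff.mpr ⟨p, hp, rfl⟩⟩
  obtain ⟨p₀, hp₀, hp₀ab⟩ := exists_chord_of_minimal hm' ha hb ha_min hb_min
  rw [← h] at ha hb ha_min hb_min
  obtain ⟨p₁, hp₁, hp₁ab⟩ := exists_chord_of_minimal hm ha hb ha_min hb_min
  obtain rfl : p₁ = p₀ := Subtype.ext (hp₁ab.trans hp₀ab.symm)
  obtain ⟨r, rfl⟩ := Finsupp.exists_eq_single_add hp₁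
  obtain ⟨r', rfl⟩ := Finsupp.exists_eq_single_add hp₀
  simp only [map_add] at h hd
  rw [ih r.degree (by simp at hd; omega) (hm.mono le_add_self) (hm'.mono le_add_self)
    (add_left_cancel h) rfl]

theorem linearIndependent_aeval_param_standard (c : ℕ) :
    LinearIndependent ℂ fun m : {m : Idx n →₀ ℕ // IsStandard m} =>
      aeval (param c n) (monomial m.1 (1 : ℂ)) :=
  MonomialOrder.lex.linearIndependent_of_injective_degree
    (fun m => (degree_aeval_param_monomial c m.2.1).2) fun m m' h =>
      Subtype.ext <| m.2.eq_of_endpoints_eq m'.2 <| by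
        simpa only [(degree_aeval_param_monomial c m.2.1).1,
          (degree_aeval_param_monomial c m'.2.1).1] using h

theorem exists_C_mul_add_mem_JGens (c : ℕ) {i j k l : Fin n} (hij : i < j) (hjk : j < k)
    (hkl : k < l) : ∃ e : ℂ, C e * (W i j hij * W k l hkl) - W i k (hij.trans hjk) *
      W j l (hjk.trans hkl) + W i l (hij.trans (hjk.trans hkl)) * W j k hjk ∈ JGens c n := by
  by_cases hmix : j.val < c ∧ c ≤ k.val
  · refine ⟨0, Or.inr ⟨i, j, k, l, hij, hjk, hkl, Or.inl ⟨hmix, ?_⟩⟩⟩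
    simp only [map_zero, zero_mul]
    ring
  · refine ⟨1, Or.inr ⟨i, j, k, l, hij, hjk, hkl, Or.inr ⟨hmix, ?_⟩⟩⟩
    rw [map_one, one_mul]

def chordWeight : Idx n → ℕ := Sum.elim (fun p => (p.1.2.val - p.1.1.val) ^ 2) 0

theorem crossing_weight_lt_nested {i j k l : ℕ} (hij : i < j) (hjk : j < k) (hkl : k < l) :
    (k - i) ^ 2 + (l - j) ^ 2 < (l - i) ^ 2 + (k - j) ^ 2 := by
  zify [show i ≤ k by omega, show j ≤ l by omega, show i ≤ l by omega, show j ≤ k by omega]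
  nlinarith [mul_pos (show (0:ℤ) < j - i by omega) (show (0:ℤ) < l - k by omega)]

theorem disjoint_weight_lt_nested {i j k l : ℕ} (hij : i < j) (hjk : j < k) (hkl : k < l) :
    (j - i) ^ 2 + (l - k) ^ 2 < (l - i) ^ 2 + (k - j) ^ 2 := by
  zify [show i ≤ j by omega, show k ≤ l by omega, show i ≤ l by omega, show j ≤ k by omega]
  nlinarith [mul_pos (show (0:ℤ) < j - i by omega) (show (0:ℤ) < l - k by omega),
    mul_pos (show (0:ℤ) < k - j by omega) (show (0:ℤ) < l - i by omega)]

theorem exists_eq_nested_add {m : Idx n →₀ ℕ} (hinf : m (Sum.inr ()) = 0)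
    (hstd : ¬ IsStandard m) :
    ∃ (i j k l : Fin n) (hij : i < j) (hjk : j < k) (hkl : k < l) (r : Idx n →₀ ℕ),
      m = Finsupp.single (Sum.inl ⟨(i, l), hij.trans (hjk.trans hkl)⟩) 1 +
        (Finsupp.single (Sum.inl ⟨(j, k), hjk⟩) 1 + r) := by
  obtain ⟨⟨⟨i, l⟩, hil⟩, ⟨⟨j, k⟩, hjk⟩, hp, hq, hij, hkl⟩ :
      ∃ p q : PIdx n, Sum.inl p ∈ m.support ∧ Sum.inl q ∈ m.support ∧ Nested p q := by
    simpa [IsStandard, hinf] using hstd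
  change i < j at hij
  change k < l at hkl
  obtain ⟨r₁, rfl⟩ := Finsupp.exists_eq_single_add hp
  obtain ⟨r, rfl⟩ := Finsupp.exists_eq_single_add (a := (Sum.inl ⟨(j, k), hjk⟩ : Idx n))
    (by simpa [Finsupp.single_apply, hij.ne] using hq)
  exact ⟨i, j, k, l, hij, hjk, hkl, r, rfl⟩

theorem nested_mul_mem (c : ℕ) {V : Submodule ℂ (MvPolynomial (Idx n) ℂ)}
    (hJ : ∀ {f}, f ∈ Ideal.span (JGens c n) → f ∈ V) {i j k l : Fin n} {hij : i < j}
    {hjk : j < k} {hkl : k < l} {M : MvPolynomial (Idx n) ℂ}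
    (hcross : W i k (hij.trans hjk) * (W j l (hjk.trans hkl) * M) ∈ V)
    (hdisj : W i j hij * (W k l hkl * M) ∈ V) :
    W i l (hij.trans (hjk.trans hkl)) * (W j k hjk * M) ∈ V := by
  obtain ⟨e, he⟩ := exists_C_mul_add_mem_JGens c hij hjk hkl
  have hik := hij.trans hjk
  have hjl := hjk.trans hkl
  have hil := hij.trans hjl
  have straighten : W i l hil * (W j k hjk * M) =
      W i k hik * (W j l hjl * M) - e • (W i j hij * (W k l hkl * M)) +
        (C e * (W i j hij * W k l hkl) - W i k hik * W j l hjl + W i l hil * W j k hjk) * M := by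
    rw [← C_mul']
    ring
  rw [straighten]
  exact add_mem (sub_mem hcross (V.smul_mem e hdisj)) (hJ (Ideal.mul_mem_right _ _
    (Ideal.subset_span he)))

variable (n) in
noncomputable def standardSpan : Submodule ℂ (MvPolynomial (Idx n) ℂ) :=
  Submodule.span ℂ
    (Set.range fun m : {m : Idx n →₀ ℕ // IsStandard m} => monomial m.1 (1 : ℂ))

theorem monomial_mem_standardSpan_sup (c : ℕ) (m : Idx n →₀ ℕ) :
    monomial m (1 : ℂ) ∈ standardSpan n ⊔ (Ideal.span (JGens c n)).restrictScalars ℂ := by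
  set V := standardSpan n ⊔ (Ideal.span (JGens c n)).restrictScalars ℂ
  have hJ : ∀ {f : MvPolynomial (Idx n) ℂ}, f ∈ Ideal.span (JGens c n) → f ∈ V :=
    fun hf => Submodule.mem_sup_right hf
  induction hw : Finsupp.weight chordWeight m using Nat.strong_induction_on generalizing m with
  | _ w ih =>
  have ih₂ : ∀ {a b a' b' : Fin n} (h : a < b) (h' : a' < b') (r : Idx n →₀ ℕ),
      (b.val - a.val) ^ 2 + (b'.val - a'.val) ^ 2 + Finsupp.weight chordWeight r < w →
        W a b h * (W a' b' h' * monomial r (1 : ℂ)) ∈ V := by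
    intro a b a' b' h h' r hlt
    have := ih _ hlt (Finsupp.single (Sum.inl ⟨(a, b), h⟩) 1 +
      (Finsupp.single (Sum.inl ⟨(a', b'), h'⟩) 1 + r))
      (by simp [Finsupp.weight_single, chordWeight, add_assoc])
    simpa only [monomial_single_add, pow_one, W] using this
  obtain hinf | hinf := ne_or_eq (m (Sum.inr ())) 0
  · obtain ⟨r, rfl⟩ := Finsupp.exists_eq_single_add (Finsupp.mem_support_iff.mpr hinf)
    rw [monomial_single_add, pow_one]
    exact hJ (Ideal.mul_mem_right _ _ (Ideal.subset_span (Set.mem_insert _ _)))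
  by_cases hstd : IsStandard m
  · exact Submodule.mem_sup_left (Submodule.subset_span ⟨⟨m, hstd⟩, rfl⟩)
  obtain ⟨i, j, k, l, hij, hjk, hkl, r, rfl⟩ := exists_eq_nested_add hinf hstd
  have hw' : (l.val - i.val) ^ 2 + (k.val - j.val) ^ 2 + Finsupp.weight chordWeight r = w := by
    simpa [Finsupp.weight_single, chordWeight, add_assoc] using hw
  rw [monomial_single_add, monomial_single_add, pow_one, pow_one]
  refine nested_mul_mem c hJ (hij := hij) (hjk := hjk) (hkl := hkl)
    (ih₂ _ _ _ ?_) (ih₂ _ _ _ ?_)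
  · have := crossing_weight_lt_nested hij hjk hkl
    omega
  · have := disjoint_weight_lt_nested hij hjk hkl
    omega

theorem mem_standardSpan_sup (c : ℕ) (f : MvPolynomial (Idx n) ℂ) :
    f ∈ standardSpan n ⊔ (Ideal.span (JGens c n)).restrictScalars ℂ := by
  have htop : ⊤ ≤ standardSpan n ⊔ (Ideal.span (JGens c n)).restrictScalars ℂ := by
    rw [← (basisMonomials (Idx n) ℂ).span_eq, Submodule.span_le, coe_basisMonomials]
    rintro _ ⟨m, rfl⟩
    exact monomial_mem_standardSpan_sup c m
  exact htop Submodule.mem_top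

theorem span_JGens_le_ker (c : ℕ) :
    Ideal.span (JGens c n) ≤ RingHom.ker (aeval (param c n)) :=
  Ideal.span_le.mpr fun _ hg => aeval_param_of_mem_JGens hg

theorem eq_zero_of_mem_standardSpan {c : ℕ} {f : MvPolynomial (Idx n) ℂ}
    (hf : f ∈ standardSpan n) (h : aeval (param c n) f = 0) : f = 0 := by
  obtain ⟨l, rfl⟩ := Finsupp.mem_span_range_iff_exists_finsupp.mp hf
  have hl : Finsupp.linearCombination ℂ (fun m : {m : Idx n →₀ ℕ // IsStandard m} =>
      aeval (param c n) (monomial m.1 (1 : ℂ))) l = 0 := by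
    rw [← h, Finsupp.linearCombination_apply, map_finsuppSum]
    simp [Finsupp.sum]
  rw [linearIndependent_iff.mp (linearIndependent_aeval_param_standard c) l hl]
  simp

theorem ker_aeval_param (c : ℕ) :
    RingHom.ker (aeval (param c n)) = Ideal.span (JGens c n) := by
  refine le_antisymm (fun f hf => ?_) (span_JGens_le_ker c)
  obtain ⟨y, hy, z, hz, rfl⟩ := Submodule.mem_sup.mp (mem_standardSpan_sup c f)
  have hz0 : aeval (param c n) z = 0 := span_JGens_le_ker c hz
  rw [RingHom.mem_ker, map_add, hz0, add_zero] at hf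
  rw [eq_zero_of_mem_standardSpan hy hf, zero_add]
  exact hz

theorem isDomain_quotient_JGens (c : ℕ) :
    IsDomain (MvPolynomial (Idx n) ℂ ⧸ Ideal.span (JGens c n)) :=
  have : (Ideal.span (JGens c n)).IsPrime := ker_aeval_param c ▸ RingHom.ker_isPrime _
  inferInstance

theorem span_JGens_eq_sup (c : ℕ) :
    Ideal.span (JGens c n) = Ideal.span (IGens c n) ⊔ Ideal.span {Tinf} := by
  set K := Ideal.span (IGens c n) ⊔ Ideal.span {(Tinf : MvPolynomial (Idx n) ℂ)}
  have hT : (Tinf : MvPolynomial (Idx n) ℂ) ∈ Ideal.span (JGens c n) :=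
    Ideal.subset_span (Set.mem_insert _ _)
  have hTK : Tinf ∈ K := Ideal.mem_sup_right (Ideal.mem_span_singleton_self _)
  apply le_antisymm
  · rw [Ideal.span_le]
    rintro g (rfl | ⟨i, j, k, l, hij, hjk, hkl, ⟨hmix, rfl⟩ | ⟨hmix, rfl⟩⟩)
    · exact hTK
    · rw [SetLike.mem_coe]
      have hI : _ ∈ K := Ideal.mem_sup_left
        (Ideal.subset_span ⟨i, j, k, l, hij, hjk, hkl, Or.inl ⟨hmix, rfl⟩⟩)
      convert K.sub_mem hI (K.mul_mem_right (W i j hij * W k l hkl) hTK) using 1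
      ring
    · exact Ideal.mem_sup_left
        (Ideal.subset_span ⟨i, j, k, l, hij, hjk, hkl, Or.inr ⟨hmix, rfl⟩⟩)
  · refine sup_le (Ideal.span_le.mpr ?_) (Ideal.span_le.mpr (Set.singleton_subset_iff.mpr hT))
    rintro g ⟨i, j, k, l, hij, hjk, hkl, ⟨hmix, rfl⟩ | ⟨hmix, rfl⟩⟩
    · rw [SetLike.mem_coe]
      have hbin : - W i k (hij.trans hjk) * W j l (hjk.trans hkl)
            + W i l (hij.trans (hjk.trans hkl)) * W j k hjk ∈ Ideal.span (JGens c n) :=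
        Ideal.subset_span (Or.inr ⟨i, j, k, l, hij, hjk, hkl, Or.inl ⟨hmix, rfl⟩⟩)
      convert add_mem hbin (Ideal.mul_mem_right (W i j hij * W k l hkl) _ hT) using 1
      ring
    · exact Ideal.subset_span (Or.inr ⟨i, j, k, l, hij, hjk, hkl, Or.inr ⟨hmix, rfl⟩⟩)

theorem Tinf_notMem_span_IGens (c : ℕ) :
    (Tinf : MvPolynomial (Idx n) ℂ) ∉ Ideal.span (IGens c n) := by
  -- evaluation at `T_{ij} = j - i`, `T_∞ = 1` kills every generator of `I` but not `T_∞`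
  let χ : MvPolynomial (Idx n) ℂ →ₐ[ℂ] ℂ :=
    aeval (Sum.elim (fun p => (p.1.2.val : ℂ) - p.1.1.val) fun _ => 1)
  have hI : Ideal.span (IGens c n) ≤ RingHom.ker χ := by
    rw [Ideal.span_le]
    rintro g ⟨i, j, k, l, hij, hjk, hkl, ⟨-, rfl⟩ | ⟨-, rfl⟩⟩ <;>
    · simp only [SetLike.mem_coe, RingHom.mem_ker, χ, W, Tinf, map_add, map_sub, map_mul,
        aeval_X, Sum.elim_inl, Sum.elim_inr]
      ring
  intro h
  simpa [χ, Tinf] using hI h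

end PluckerDegeneration

theorem stmt_12_general (c d : ℕ) :
    Prime (Ideal.Quotient.mk (Ideal.span (IGens c (c + d))) Tinf) ∧
    IsDomain (MvPolynomial (Idx (c + d)) ℂ ⧸ Ideal.span (JGens c (c + d))) := by
  have hJ := PluckerDegeneration.isDomain_quotient_JGens (n := c + d) c
  refine ⟨Ideal.prime_mk_of_isDomain_quotient_sup
    (PluckerDegeneration.Tinf_notMem_span_IGens c) ?_, hJ⟩
  rwa [← PluckerDegeneration.span_JGens_eq_sup]

/-- For `c, d > 2` and `n = c + d`, the class of `T_∞` is a prime element of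
`R = ℂ[T_{ij}, T_∞]/I`; equivalently, `R/(T_∞) ≅ ℂ[T_{ij}, T_∞]/J` is an integral domain. -/
theorem stmt_12 (c d : ℕ) (hc : 2 < c) (hd : 2 < d) :
    Prime (Ideal.Quotient.mk (Ideal.span (IGens c (c + d))) Tinf) ∧
    IsDomain (MvPolynomial (Idx (c + d)) ℂ ⧸ Ideal.span (JGens c (c + d))) :=
  stmt_12_general c d
end
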